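/- Let C₁ = |0⟩⟨1| be the 2×2 matrix [[0,1],[0,0]], let m ≥ 1, and let W be a nonzero Hermitian m×m complex matrix. Then there exist ξ ∈ ℂ^{2m} and t ∈ ℝ such that ⟨exp(−it(σ_z⊗W))ξ, (C₁⊗I_m) exp(−it(σ_z⊗W))ξ⟩ ≠ ⟨ξ, (C₁⊗I_m)ξ⟩. That is, the single-qubit coherence output is not invariant under the dephasing interaction with the environment. -/

import Mathlib

/-!
If the coherence `⟨U_t ξ, C U_t ξ⟩`, `U_t = exp (-i t A)`, were constant in `t`, its derivative at
`t = 0` would give `⟨ξ, [A, C] ξ⟩ = 0`. For `A = σ_z ⊗ W` and `C = C₁ ⊗ 1` the commutator is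
`[σ_z, C₁] ⊗ W = 2 C₁ ⊗ W`, whose expectation in `|0, i⟩ + |1, j⟩` is `2 W i j`; this is nonzero
for a nonzero entry of `W`.
-/

open Matrix NormedSpace
open scoped Kronecker

noncomputable section

def σz : Matrix (Fin 2) (Fin 2) ℂ := !![1, 0; 0, -1]

/-- `C₁ = |0⟩⟨1|` -/
def C₁ : Matrix (Fin 2) (Fin 2) ℂ := !![0, 1; 0, 0]

theorem map_commutator_eq_zero_of_map_conj_exp_eq {𝕂 𝔸 E : Type*} [RCLike 𝕂] [NormedRing 𝔸]
    [NormedAlgebra 𝕂 𝔸] [CompleteSpace 𝔸] [NormedAddCommGroup E] [NormedSpace 𝕂 E]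
    (φ : 𝔸 →L[𝕂] E) (X N : 𝔸) (h : ∀ t : 𝕂, φ (exp (t • X) * N * exp ((-t) • X)) = φ N) :
    φ (X * N - N * X) = 0 := by
  have hconj : HasDerivAt (fun t : 𝕂 => exp (t • X) * N * exp ((-t) • X)) (X * N - N * X) 0 := by
    have h₃ := ((hasDerivAt_exp_smul_const X 0).mul_const N).mul
      (hasDerivAt_exp_smul_const (𝕂 := 𝕂) (-X) 0)
    simp only [zero_smul, neg_zero, exp_zero, one_mul, mul_one, mul_neg, smul_neg] at h₃
    simp only [neg_smul, sub_eq_add_neg]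
    exact h₃
  refine (φ.hasFDerivAt.comp_hasDerivAt (0 : 𝕂) hconj).unique ?_
  simp only [Function.comp_def, h]
  exact hasDerivAt_const _ _

section

variable {n : Type*} [Fintype n]

theorem star_mulVec_dotProduct_mulVec_mulVec {R : Type*} [CommSemiring R] [StarRing R]
    (U N : Matrix n n R) (ξ : n → R) :
    star (U *ᵥ ξ) ⬝ᵥ N *ᵥ (U *ᵥ ξ) = star ξ ⬝ᵥ (Uᴴ * N * U) *ᵥ ξ := by
  simp only [star_mulVec, dotProduct_mulVec, vecMul_vecMul, Matrix.mul_assoc]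

def expectation (ξ : n → ℂ) : Matrix n n ℂ →L[ℂ] ℂ :=
  LinearMap.toContinuousLinearMap
    { toFun N := star ξ ⬝ᵥ N *ᵥ ξ
      map_add' M N := by simp [add_mulVec, dotProduct_add]
      map_smul' c M := by simp [smul_mulVec, dotProduct_smul] }

variable [DecidableEq n]

theorem conjTranspose_exp_mul_mul_exp_of_isHermitian {A : Matrix n n ℂ} (hA : A.IsHermitian)
    (N : Matrix n n ℂ) (t : ℝ) :
    (exp ((-Complex.I * t) • A))ᴴ * N * exp ((-Complex.I * t) • A) =
      exp (t • (Complex.I • A)) * N * exp ((-t) • (Complex.I • A)) := by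
  rw [← exp_conjTranspose, conjTranspose_smul, hA.eq]
  simp only [← smul_assoc, Complex.real_smul, Complex.ofReal_neg]
  rw [show star (-Complex.I * t) = t * Complex.I by simp [mul_comm],
    show -Complex.I * t = -t * Complex.I by ring]

-- Matrices carry no global norm; any one makes `exp` differentiable.
attribute [local instance] Matrix.linftyOpNormedRing Matrix.linftyOpNormedAlgebra

theorem star_dotProduct_commutator_mulVec_eq_zero_of_conserved {A : Matrix n n ℂ}
    (hA : A.IsHermitian) (N : Matrix n n ℂ) (ξ : n → ℂ)
    (h : ∀ t : ℝ, star (exp ((-Complex.I * t) • A) *ᵥ ξ) ⬝ᵥ N *ᵥ (exp ((-Complex.I * t) • A) *ᵥ ξ) =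
      star ξ ⬝ᵥ N *ᵥ ξ) :
    star ξ ⬝ᵥ (A * N - N * A) *ᵥ ξ = 0 := by
  have hI := map_commutator_eq_zero_of_map_conj_exp_eq ((expectation ξ).restrictScalars ℝ)
    (Complex.I • A) N fun t => by
      have h' := (star_mulVec_dotProduct_mulVec_mulVec _ N ξ).symm.trans (h t)
      rw [conjTranspose_exp_mul_mul_exp_of_isHermitian hA] at h'
      exact h'
  change star ξ ⬝ᵥ _ *ᵥ ξ = 0 at hI
  rw [smul_mul_assoc, mul_smul_comm, ← smul_sub, smul_mulVec, dotProduct_smul, smul_eq_mul,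
    mul_eq_zero] at hI
  exact hI.resolve_left Complex.I_ne_zero

end

theorem Matrix.sub_kronecker {R l m n p : Type*} [Ring R] (A₁ A₂ : Matrix l m R)
    (B : Matrix n p R) : (A₁ - A₂) ⊗ₖ B = A₁ ⊗ₖ B - A₂ ⊗ₖ B := by
  ext; simp [sub_mul]

theorem Matrix.IsHermitian.kronecker {R m n : Type*} [CommRing R] [StarRing R] {A : Matrix m m R}
    {B : Matrix n n R} (hA : A.IsHermitian) (hB : B.IsHermitian) : (A ⊗ₖ B).IsHermitian := by
  rw [IsHermitian, conjTranspose_kronecker, hA.eq, hB.eq]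

theorem kronecker_commutator_kronecker_one {R l m : Type*} [CommRing R] [Fintype l] [Fintype m]
    [DecidableEq m] (P Q : Matrix l l R) (B : Matrix m m R) :
    (P ⊗ₖ B) * (Q ⊗ₖ 1) - (Q ⊗ₖ 1) * (P ⊗ₖ B) = (P * Q - Q * P) ⊗ₖ B := by
  rw [← mul_kronecker_mul, ← mul_kronecker_mul, Matrix.mul_one, Matrix.one_mul, sub_kronecker]

theorem isHermitian_σz : σz.IsHermitian := by
  ext i j; fin_cases i <;> fin_cases j <;> simp [σz]

theorem σz_commutator_C₁ : σz * C₁ - C₁ * σz = (2 : ℂ) • C₁ := by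
  ext i j; fin_cases i <;> fin_cases j <;> norm_num [σz, C₁]

theorem star_dotProduct_C₁_kronecker_mulVec {m : Type*} [Fintype m] [DecidableEq m]
    (M : Matrix m m ℂ) (i j : m) :
    star (Pi.single (0, i) 1 + Pi.single (1, j) 1 : Fin 2 × m → ℂ) ⬝ᵥ
      (C₁ ⊗ₖ M) *ᵥ (Pi.single (0, i) 1 + Pi.single (1, j) 1) = M i j := by
  simp [mulVec_add, dotProduct_add, add_dotProduct, mulVec_single, single_dotProduct, C₁]

theorem single_qubit_coherence_not_invariant_general
    (m : ℕ) (W : Matrix (Fin m) (Fin m) ℂ) (hW : W ≠ 0) (hWherm : Wᴴ = W) :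
    ∃ (ξ : Fin 2 × Fin m → ℂ) (t : ℝ),
      star ((exp ((-Complex.I * (t : ℂ)) • (σz ⊗ₖ W))).mulVec ξ) ⬝ᵥ
          (C₁ ⊗ₖ (1 : Matrix (Fin m) (Fin m) ℂ)).mulVec
            ((exp ((-Complex.I * (t : ℂ)) • (σz ⊗ₖ W))).mulVec ξ) ≠
        star ξ ⬝ᵥ (C₁ ⊗ₖ (1 : Matrix (Fin m) (Fin m) ℂ)).mulVec ξ := by
  obtain ⟨i, j, hij⟩ : ∃ i j, W i j ≠ 0 := by
    by_contra! h
    exact hW (Matrix.ext h)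
  by_contra! hconst
  have h := star_dotProduct_commutator_mulVec_eq_zero_of_conserved
    (isHermitian_σz.kronecker hWherm) _ _ (hconst (Pi.single (0, i) 1 + Pi.single (1, j) 1))
  rw [kronecker_commutator_kronecker_one, σz_commutator_C₁, smul_kronecker, smul_mulVec,
    dotProduct_smul, star_dotProduct_C₁_kronecker_mulVec] at h
  exact hij (by simpa using h)

/-- The single-qubit coherence output is not invariant under the dephasing interaction
`σ_z ⊗ W` with a nonzero Hermitian environment operator `W`. -/
theorem single_qubit_coherence_not_invariant
    (m : ℕ) (hm : 1 ≤ m) (W : Matrix (Fin m) (Fin m) ℂ) (hW : W ≠ 0) (hWherm : Wᴴ = W) :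
    ∃ (ξ : Fin 2 × Fin m → ℂ) (t : ℝ),
      star ((exp ((-Complex.I * (t : ℂ)) • (σz ⊗ₖ W))).mulVec ξ) ⬝ᵥ
          (C₁ ⊗ₖ (1 : Matrix (Fin m) (Fin m) ℂ)).mulVec
            ((exp ((-Complex.I * (t : ℂ)) • (σz ⊗ₖ W))).mulVec ξ) ≠
        star ξ ⬝ᵥ (C₁ ⊗ₖ (1 : Matrix (Fin m) (Fin m) ℂ)).mulVec ξ :=
  single_qubit_coherence_not_invariant_general m W hW hWherm

end
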